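/- arXiv:2511.20053 — 3 statements merged into one kernel-verified Lean document; each statement's English description precedes it below -/
import Mathlib

section
/- Let λ ∈ ℂ with |λ| = 1 and n ≥ 1. Then the normalized powers (1 / C(m, n)) · J(λ, n+1)^m, viewed as matrices, satisfy: every entry except the (1, n+1)-entry tends to 0 as m → ∞, while the (1, n+1)-entry has modulus tending to 1. -/
/-! `J(λ, k) = N + λ • 1` with `N` the nilpotent shift, so the binomial theorem gives
`J(λ, k)^m i j = C(m, j - i) λ^(m - (j - i))` on and above the diagonal. For `|λ| = 1` the
normalized entries therefore have modulus `C(m, d) / C(m, n)` with `d = j - i`, which is `1` at the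
corner `d = n` and tends to `0` for `d < n`, being a product of the ratios
`C(m, k) / C(m, k + 1) = (k + 1) / (m - k)`. -/

open Filter Topology

/-- The `k × k` upper-triangular Jordan block with eigenvalue `lam`. -/
def jordanBlock (lam : ℂ) (k : ℕ) : Matrix (Fin k) (Fin k) ℂ :=
  fun i j => if (j : ℕ) = (i : ℕ) then lam
    else if (j : ℕ) = (i : ℕ) + 1 then 1 else 0

def shiftMatrix (R : Type*) [Zero R] [One R] (k : ℕ) : Matrix (Fin k) (Fin k) R :=
  Matrix.of fun i j => if (i : ℕ) + 1 = j then 1 else 0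

section

variable {R : Type*} [Semiring R] {k : ℕ}

lemma shiftMatrix_apply (i j : Fin k) :
    shiftMatrix R k i j = if (i : ℕ) + 1 = j then 1 else 0 :=
  rfl

lemma shiftMatrix_pow_apply (d : ℕ) (i j : Fin k) :
    (shiftMatrix R k ^ d) i j = if (i : ℕ) + d = j then 1 else 0 := by
  induction d generalizing i with
  | zero => simp [Matrix.one_apply, Fin.ext_iff]
  | succ d ih =>
    rw [pow_succ', Matrix.mul_apply]
    by_cases hi : (i : ℕ) + 1 < k
    · rw [Finset.sum_eq_single ⟨i + 1, hi⟩ (fun l _ hl => by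
        rw [shiftMatrix_apply, if_neg (fun h => hl (Fin.ext h.symm)), zero_mul]) (by simp)]
      simp only [shiftMatrix_apply, ih, if_true, one_mul]
      congr 1
      simp only [eq_iff_iff]
      omega
    · rw [if_neg (by omega)]
      exact Finset.sum_eq_zero fun l _ => by rw [shiftMatrix_apply, if_neg (by omega), zero_mul]

end

lemma jordanBlock_eq_shiftMatrix_add (lam : ℂ) (k : ℕ) :
    jordanBlock lam k = shiftMatrix ℂ k + lam • 1 := by
  ext i j
  simp only [jordanBlock, shiftMatrix_apply, Matrix.add_apply, Matrix.smul_apply,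
    Matrix.one_apply, Fin.ext_iff, smul_eq_mul, mul_ite, mul_one, mul_zero]
  split_ifs <;> first | (exfalso; omega) | simp

lemma jordanBlock_pow_apply (lam : ℂ) (k m : ℕ) (i j : Fin k) :
    (jordanBlock lam k ^ m) i j =
      if (i : ℕ) ≤ j then (m.choose (j - i) : ℂ) * lam ^ (m - (j - i)) else 0 := by
  have hc : Commute (shiftMatrix ℂ k) (lam • 1) := (Commute.one_right _).smul_right lam
  rw [jordanBlock_eq_shiftMatrix_add, hc.add_pow, Matrix.sum_apply]
  simp only [← nsmul_eq_mul', smul_pow, one_pow, Matrix.smul_apply, Matrix.mul_smul, mul_one,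
    shiftMatrix_pow_apply, smul_eq_mul, nsmul_eq_mul, mul_ite, mul_zero]
  split_ifs with hij
  · rw [Finset.sum_eq_single (j - i : ℕ)]
    · rw [if_pos (by omega)]
    · intro d _ hd
      rw [if_neg (by omega)]
    · intro hd
      rw [Finset.mem_range, not_lt] at hd
      rw [Nat.choose_eq_zero_of_lt (by omega)]
      simp
  · exact Finset.sum_eq_zero fun d _ => if_neg (by omega)

lemma norm_jordanBlock_pow_apply {lam : ℂ} (hlam : ‖lam‖ = 1) (k m : ℕ) (i j : Fin k) :
    ‖(jordanBlock lam k ^ m) i j‖ = if (i : ℕ) ≤ j then (m.choose (j - i) : ℝ) else 0 := by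
  rw [jordanBlock_pow_apply]
  split_ifs
  · rw [norm_mul, norm_pow, hlam, one_pow, mul_one, Complex.norm_natCast]
  · exact norm_zero

lemma tendsto_choose_div_choose_succ (k : ℕ) :
    Tendsto (fun m : ℕ => (m.choose k : ℝ) / m.choose (k + 1)) atTop (𝓝 0) := by
  have hlim : Tendsto (fun m : ℕ => ((k + 1 : ℕ) : ℝ) / ((m - k : ℕ) : ℝ)) atTop (𝓝 0) :=
    tendsto_const_nhds.div_atTop (tendsto_natCast_atTop_atTop.comp (tendsto_sub_atTop_nat k))
  refine hlim.congr' ?_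
  filter_upwards [eventually_gt_atTop k] with m hm
  have hpos : (0 : ℝ) < m.choose (k + 1) := by exact_mod_cast Nat.choose_pos hm
  have hsub : (0 : ℝ) < (m - k : ℕ) := by exact_mod_cast Nat.sub_pos_of_lt hm
  rw [div_eq_div_iff hsub.ne' hpos.ne', mul_comm]
  exact_mod_cast Nat.choose_succ_right_eq m k

lemma tendsto_choose_div_choose {d n : ℕ} (h : d < n) :
    Tendsto (fun m : ℕ => (m.choose d : ℝ) / m.choose n) atTop (𝓝 0) := by
  induction n, h using Nat.le_induction with
  | base => exact tendsto_choose_div_choose_succ d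
  | succ n _ ih =>
    have hprod := ih.mul (tendsto_choose_div_choose_succ n)
    rw [mul_zero] at hprod
    refine hprod.congr' ?_
    filter_upwards [eventually_ge_atTop n] with m hm
    exact div_mul_div_cancel₀ (by exact_mod_cast (Nat.choose_pos hm).ne')

theorem jordanBlock_normalized_pow_general (lam : ℂ) (hlam : ‖lam‖ = 1)
    (n : ℕ) :
    (∀ i j : Fin (n + 1), (i, j) ≠ (0, Fin.last n) →
      Tendsto (fun m : ℕ =>
          (1 / (m.choose n : ℂ)) * ((jordanBlock lam (n + 1)) ^ m) i j)
        atTop (𝓝 0)) ∧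
    Tendsto (fun m : ℕ =>
        ‖(1 / (m.choose n : ℂ)) *
          ((jordanBlock lam (n + 1)) ^ m) 0 (Fin.last n)‖)
      atTop (𝓝 1) := by
  have hnorm (m : ℕ) (i j : Fin (n + 1)) :
      ‖(1 / (m.choose n : ℂ)) * (jordanBlock lam (n + 1) ^ m) i j‖ =
        if (i : ℕ) ≤ j then (m.choose (j - i) : ℝ) / m.choose n else 0 := by
    rw [norm_mul, norm_jordanBlock_pow_apply hlam, norm_div, norm_one, Complex.norm_natCast,
      mul_ite, mul_zero, one_div_mul_eq_div]
  refine ⟨fun i j hij => ?_, ?_⟩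
  · rw [tendsto_zero_iff_norm_tendsto_zero]
    simp only [hnorm]
    by_cases hle : (i : ℕ) ≤ j
    · have hlt : (j : ℕ) - i < n := by
        have := j.is_le
        contrapose! hij
        simp only [Prod.ext_iff, Fin.ext_iff, Fin.val_zero, Fin.val_last]
        omega
      simpa only [if_pos hle] using tendsto_choose_div_choose hlt
    · simpa only [if_neg hle] using tendsto_const_nhds
  · refine tendsto_const_nhds.congr' ?_
    filter_upwards [eventually_ge_atTop n] with m hm
    simp only [hnorm, Fin.val_zero, Fin.val_last, Nat.zero_le, if_true, Nat.sub_zero]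
    exact (div_self (by exact_mod_cast (Nat.choose_pos hm).ne')).symm

/-- behaviour of the normalized powers `(1 / C(m, n)) • J(λ, n+1)^m`. -/
theorem jordanBlock_normalized_pow (lam : ℂ) (hlam : ‖lam‖ = 1)
    (n : ℕ) (hn : 1 ≤ n) :
    (∀ i j : Fin (n + 1), (i, j) ≠ (0, Fin.last n) →
      Tendsto (fun m : ℕ =>
          (1 / (m.choose n : ℂ)) * ((jordanBlock lam (n + 1)) ^ m) i j)
        atTop (𝓝 0)) ∧
    Tendsto (fun m : ℕ =>
        ‖(1 / (m.choose n : ℂ)) *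
          ((jordanBlock lam (n + 1)) ^ m) 0 (Fin.last n)‖)
      atTop (𝓝 1) :=
  jordanBlock_normalized_pow_general lam hlam n
end

section
/- Let λ ∈ ℂ with |λ| = 1 and n ≥ 1. Then the normalized inverse powers (1 / C(m+n-1, n)) · J(λ, n+1)^{-m} satisfy: every entry except the (1, n+1)-entry tends to 0 as m → ∞, while the (1, n+1)-entry has modulus tending to 1. -/
open Filter Topology

/-! Upper Jordan blocks and their inverse powers are upper-triangular Toeplitz matrices, and those
multiply like truncated power series: `J(λ, k)^{-m}` is the Toeplitz matrix of the coefficients of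
`(λ + X)^{-m}`, namely `(-1)^d C(m+d-1, d) λ^{-m-d}`. For `|λ| = 1` the entry on the `d`-th
superdiagonal has modulus `C(m+d-1, d)`, a polynomial of degree `d` in `m`; only the corner
`d = n` grows as fast as the normalising `C(m+n-1, n)`. -/

namespace Matrix

variable {R : Type*}

def upperToeplitz [Zero R] (k : ℕ) (c : ℕ → R) : Matrix (Fin k) (Fin k) R :=
  of fun i j => if (i : ℕ) ≤ j then c (j - i) else 0

theorem upperToeplitz_mul_upperToeplitz [Semiring R] (k : ℕ) (a b : ℕ → R) :
    upperToeplitz k a * upperToeplitz k b =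
      upperToeplitz k fun d => ∑ l ∈ Finset.range (d + 1), a l * b (d - l) := by
  ext i j
  let f : ℕ → R := fun x =>
    (if (i : ℕ) ≤ x then a (x - i) else 0) * (if x ≤ (j : ℕ) then b (j - x) else 0)
  have hj := j.isLt
  rw [mul_apply]
  simp only [upperToeplitz, of_apply]
  rw [Fin.sum_univ_eq_sum_range f]
  split_ifs with hij
  · have hsub : Finset.Ico (i : ℕ) (j + 1) ⊆ Finset.range k := fun x hx => by
      simp only [Finset.mem_Ico, Finset.mem_range] at hx ⊢; omega
    rw [← Finset.sum_subset hsub fun x _ hx => ?outside, Finset.sum_Ico_eq_sum_range,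
      show (j : ℕ) + 1 - i = j - i + 1 by omega]
    case outside =>
      simp only [Finset.mem_Ico, not_and_or, not_le, not_lt] at hx
      rcases hx with hx | hx <;> simp [f, Nat.not_le.mpr hx]
    refine Finset.sum_congr rfl fun l hl => ?_
    rw [Finset.mem_range] at hl
    simp only [f, if_pos (Nat.le_add_right _ _), if_pos (show (i : ℕ) + l ≤ j by omega),
      Nat.add_sub_cancel_left, show (j : ℕ) - (i + l) = j - i - l by omega]
  · refine Finset.sum_eq_zero fun x _ => ?_
    by_cases hx : (i : ℕ) ≤ x
    · simp [f, show ¬ x ≤ (j : ℕ) by omega]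
    · simp [f, hx]

theorem upperToeplitz_ite_zero [Semiring R] (k : ℕ) :
    upperToeplitz k (fun d => if d = 0 then (1 : R) else 0) = 1 := by
  ext i j
  simp only [upperToeplitz, of_apply, one_apply, Fin.ext_iff]
  split_ifs <;> first | rfl | omega

theorem inv_pow_eq_of_mul_succ {ι : Type*} [Fintype ι] [DecidableEq ι] [CommRing R]
    {A : Matrix ι ι R} {B : ℕ → Matrix ι ι R} (h0 : B 0 = 1) (hB : ∀ m, A * B (m + 1) = B m)
    (m : ℕ) : A⁻¹ ^ m = B m := by
  have hA : A * B 1 = 1 := h0 ▸ hB 0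
  have hinv_mul : A⁻¹ * A = 1 := by
    rw [inv_eq_right_inv hA]; exact mul_eq_one_comm.mp hA
  induction m with
  | zero => rw [pow_zero, h0]
  | succ m ih => rw [pow_succ', ih, ← hB m, ← mul_assoc, hinv_mul, one_mul]

end Matrix

open Matrix

theorem jordanBlock_eq_upperToeplitz (lam : ℂ) (k : ℕ) :
    jordanBlock lam k =
      upperToeplitz k fun d => if d = 0 then lam else if d = 1 then 1 else 0 := by
  ext i j
  simp only [jordanBlock, upperToeplitz, of_apply]
  split_ifs <;> first | rfl | omega

noncomputable def jordanInvPowCoeff {K : Type*} [Field K] (lam : K) (m d : ℕ) : K :=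
  (-1) ^ d * ((m + d - 1).choose d : K) * lam⁻¹ ^ (m + d)

section Coeff

variable {K : Type*} [Field K]

theorem jordanInvPowCoeff_zero_left (lam : K) :
    jordanInvPowCoeff lam 0 = fun d => if d = 0 then 1 else 0 := by
  funext d
  cases d with
  | zero => simp [jordanInvPowCoeff]
  | succ d => simp [jordanInvPowCoeff]

theorem mul_jordanInvPowCoeff_succ_zero {lam : K} (hlam : lam ≠ 0) (m : ℕ) :
    lam * jordanInvPowCoeff lam (m + 1) 0 = jordanInvPowCoeff lam m 0 := by
  simp only [jordanInvPowCoeff, add_zero, pow_zero, Nat.choose_zero_right, Nat.cast_one, one_mul]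
  rw [pow_succ', ← mul_assoc, mul_inv_cancel₀ hlam, one_mul]

theorem mul_jordanInvPowCoeff_succ_succ {lam : K} (hlam : lam ≠ 0) (m d : ℕ) :
    lam * jordanInvPowCoeff lam (m + 1) (d + 1) + jordanInvPowCoeff lam (m + 1) d =
      jordanInvPowCoeff lam m (d + 1) := by
  have pascal :
      ((m + d + 1).choose (d + 1) : K) = (m + d).choose d + (m + d).choose (d + 1) := by
    rw [Nat.choose_succ_succ, Nat.cast_add]
  have cancel : lam * lam⁻¹ ^ (m + 1 + (d + 1)) = lam⁻¹ ^ (m + 1 + d) := by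
    rw [show m + 1 + (d + 1) = m + 1 + d + 1 by omega, pow_succ', ← mul_assoc,
      mul_inv_cancel₀ hlam, one_mul]
  simp only [jordanInvPowCoeff, show m + 1 + (d + 1) - 1 = m + d + 1 by omega,
    show m + 1 + d - 1 = m + d by omega, show m + (d + 1) = m + 1 + d by omega, pascal]
  linear_combination (-1) ^ (d + 1) * (((m + d).choose d : K) + (m + d).choose (d + 1)) * cancel

end Coeff

theorem jordanBlock_mul_upperToeplitz_jordanInvPowCoeff {lam : ℂ} (hlam : lam ≠ 0) (k m : ℕ) :
    jordanBlock lam k * upperToeplitz k (jordanInvPowCoeff lam (m + 1)) =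
      upperToeplitz k (jordanInvPowCoeff lam m) := by
  rw [jordanBlock_eq_upperToeplitz, upperToeplitz_mul_upperToeplitz]
  congr 1
  funext d
  cases d with
  | zero => simpa using mul_jordanInvPowCoeff_succ_zero hlam m
  | succ d =>
    rw [Finset.sum_range_succ', Finset.sum_range_succ']
    simpa [add_comm] using mul_jordanInvPowCoeff_succ_succ hlam m d

theorem jordanBlock_inv_pow {lam : ℂ} (hlam : lam ≠ 0) (k m : ℕ) :
    (jordanBlock lam k)⁻¹ ^ m = upperToeplitz k (jordanInvPowCoeff lam m) :=
  inv_pow_eq_of_mul_succ (B := fun m => upperToeplitz k (jordanInvPowCoeff lam m))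
    (by rw [jordanInvPowCoeff_zero_left, upperToeplitz_ite_zero])
    (jordanBlock_mul_upperToeplitz_jordanInvPowCoeff hlam k) m

theorem norm_jordanInvPowCoeff {lam : ℂ} (hlam : ‖lam‖ = 1) (m d : ℕ) :
    ‖jordanInvPowCoeff lam m d‖ = (m + d - 1).choose d := by
  simp [jordanInvPowCoeff, hlam]

theorem Nat.choose_add_mul_le_succ_mul_choose {p d q : ℕ} (h : d ≤ q) :
    (p + d).choose d * p ≤ (q + 1) * (p + q + 1).choose (q + 1) :=
  calc (p + d).choose d * p ≤ (p + q).choose q * (p + q + 1) := by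
        refine Nat.mul_le_mul ?_ (by omega)
        rw [← Nat.choose_symm_add, ← Nat.choose_symm_add]
        exact Nat.choose_le_choose p (by omega)
    _ = (q + 1) * (p + q + 1).choose (q + 1) := by
        rw [mul_comm, Nat.add_one_mul_choose_eq, mul_comm]

theorem tendsto_choose_div_choose_of_lt {d n : ℕ} (h : d < n) :
    Tendsto (fun m : ℕ => ((m + d - 1).choose d : ℝ) / (m + n - 1).choose n) atTop (𝓝 0) := by
  obtain ⟨q, rfl⟩ : ∃ q, n = q + 1 := ⟨n - 1, by omega⟩
  rw [Nat.lt_succ_iff] at h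
  rw [← tendsto_add_atTop_iff_nat 1]
  simp only [show ∀ p, p + 1 + d - 1 = p + d by omega,
    show ∀ p, p + 1 + (q + 1) - 1 = p + q + 1 by omega]
  refine squeeze_zero' (.of_forall fun p => by positivity) ?_
    (tendsto_const_div_atTop_nhds_zero_nat ((q + 1 : ℕ) : ℝ))
  filter_upwards [eventually_gt_atTop 0] with p hp
  rw [div_le_div_iff₀ (by exact_mod_cast Nat.choose_pos (by omega)) (by exact_mod_cast hp)]
  exact_mod_cast Nat.choose_add_mul_le_succ_mul_choose h

theorem jordanBlock_normalized_inv_pow_general (lam : ℂ) (hlam : ‖lam‖ = 1)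
    (n : ℕ) :
    (∀ i j : Fin (n + 1), (i, j) ≠ (0, Fin.last n) →
      Tendsto (fun m : ℕ =>
          (1 / ((m + n - 1).choose n : ℂ)) *
            (((jordanBlock lam (n + 1))⁻¹) ^ m) i j)
        atTop (𝓝 0)) ∧
    Tendsto (fun m : ℕ =>
        ‖(1 / ((m + n - 1).choose n : ℂ)) *
          (((jordanBlock lam (n + 1))⁻¹) ^ m) 0 (Fin.last n)‖)
      atTop (𝓝 1) := by
  have hlam0 : lam ≠ 0 := norm_ne_zero_iff.mp (hlam ▸ one_ne_zero)
  simp only [jordanBlock_inv_pow hlam0, upperToeplitz, of_apply]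
  refine ⟨fun i j hij => ?_, ?_⟩
  · split_ifs with hle
    · have hd : (j : ℕ) - i < n := by
        simp only [ne_eq, Prod.mk.injEq, Fin.ext_iff, Fin.val_zero, Fin.val_last] at hij
        omega
      rw [tendsto_zero_iff_norm_tendsto_zero]
      simpa [norm_jordanInvPowCoeff hlam, div_eq_inv_mul] using tendsto_choose_div_choose_of_lt hd
    · simp
  · refine tendsto_const_nhds.congr' ?_
    filter_upwards [eventually_gt_atTop 0] with m hm
    have hchoose : ((m + n - 1).choose n : ℝ) ≠ 0 := by
      exact_mod_cast (Nat.choose_pos (by omega)).ne'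
    simp [norm_jordanInvPowCoeff hlam, hchoose]

/-- behaviour of the normalized inverse powers
`(1 / C(m+n-1, n)) • J(λ, n+1)^{-m}`. -/
theorem jordanBlock_normalized_inv_pow (lam : ℂ) (hlam : ‖lam‖ = 1)
    (n : ℕ) (hn : 1 ≤ n) :
    (∀ i j : Fin (n + 1), (i, j) ≠ (0, Fin.last n) →
      Tendsto (fun m : ℕ =>
          (1 / ((m + n - 1).choose n : ℂ)) *
            (((jordanBlock lam (n + 1))⁻¹) ^ m) i j)
        atTop (𝓝 0)) ∧
    Tendsto (fun m : ℕ =>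
        ‖(1 / ((m + n - 1).choose n : ℂ)) *
          (((jordanBlock lam (n + 1))⁻¹) ^ m) 0 (Fin.last n)‖)
      atTop (𝓝 1) :=
  jordanBlock_normalized_inv_pow_general lam hlam n
end

section
/- Let λ₁, λ₂ ∈ ℂ with 0 < |λ₁| < |λ₂|, and let k₁, k₂ ≥ 1. For γ = diag(λ₁·J(1,k₁), λ₂·J(1,k₂)), the normalized inverse powers (λ₁^m / C(m+k₁-2, k₁-1)) · γ^{-m} converge entrywise as m → ∞ to the matrix whose only nonzero entry has modulus 1 and lies in position (1, k₁), with the entire second block tending to 0. -/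
/-!
The inverse of `γ` is block diagonal with blocks `λᵢ⁻¹ • J(1, kᵢ)⁻¹`, and `J(1, k)^(-(m + 1))` is
the upper-triangular Toeplitz matrix with `(-1)^d * C(m + d, d)` on its `d`-th superdiagonal, since
by Pascal's rule `J(1, k)` maps the `(m + 1)`-st of these matrices to the `m`-th. After
normalization, the `(1, k₁)` entry of the first block is exactly `(-1)^(k₁ - 1)`, while every other
nonzero entry there is `±C(m + d, d) / C(m + k₁ - 1, k₁ - 1)` with `d < k₁ - 1`, which is
`O(1/m)`. In the second block the entries grow polynomially in `m`, which the geometric factor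
`(λ₁ / λ₂)^m` kills.
-/

open Filter Topology

lemma Nat.add_one_mul_add_choose_le {d e : ℕ} (h : d < e) (m : ℕ) :
    (m + 1) * (m + d).choose d ≤ e * (m + e).choose e :=
  calc (m + 1) * (m + d).choose d ≤ (m + d + 1) * (m + d).choose d := by gcongr; omega
    _ = (d + 1) * (m + (d + 1)).choose (d + 1) := by
      rw [Nat.add_one_mul_choose_eq, mul_comm, add_assoc]
    _ ≤ e * (m + e).choose e := by
      gcongr
      · exact h
      · rw [← Nat.choose_symm_add, ← Nat.choose_symm_add]
        exact Nat.choose_le_choose m (by omega)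

lemma tendsto_add_choose_div_add_choose {d e : ℕ} (h : d < e) :
    Tendsto (fun m : ℕ => ((m + d).choose d : ℝ) / (m + e).choose e) atTop (𝓝 0) := by
  have hbound : Tendsto (fun m : ℕ => (e : ℝ) / ((m + 1 : ℕ) : ℝ)) atTop (𝓝 0) :=
    (tendsto_add_atTop_iff_nat 1).2 (tendsto_const_div_atTop_nhds_zero_nat _)
  refine squeeze_zero (fun m => by positivity) (fun m => ?_) hbound
  have hpos : (0 : ℝ) < (m + e).choose e := by exact_mod_cast Nat.choose_pos (by omega)
  rw [div_le_div_iff₀ hpos (by positivity)]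
  exact_mod_cast (mul_comm _ _).trans_le (Nat.add_one_mul_add_choose_le h m)

def upperToeplitz {R : Type*} [Zero R] (k : ℕ) (f : ℕ → R) : Matrix (Fin k) (Fin k) R :=
  Matrix.of fun i j => if (i : ℕ) ≤ j then f (j - i) else 0

/-- The coefficient of `x ^ d` in `(1 + x) ^ (-(m + 1))`. -/
def negBinomCoeff (m d : ℕ) : ℂ := (-1) ^ d * (m + d).choose d

section
variable {k : ℕ}

lemma jordanBlock_one_mul_apply (M : Matrix (Fin k) (Fin k) ℂ) (i j : Fin k) :
    (jordanBlock 1 k * M) i j = M i j + if h : (i : ℕ) + 1 < k then M ⟨i + 1, h⟩ j else 0 := by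
  rw [Matrix.mul_apply]
  split_ifs with h
  · rw [Finset.sum_eq_add i ⟨i + 1, h⟩ (by simp [Fin.ext_iff])]
    · simp [jordanBlock]
    · intro l _ hl
      simp only [jordanBlock]
      grind
    all_goals simp
  · rw [Finset.sum_eq_single i]
    · simp [jordanBlock]
    · intro l _ hl
      simp only [jordanBlock]
      grind
    · simp

lemma jordanBlock_one_mul_upperToeplitz (f : ℕ → ℂ) :
    jordanBlock 1 k * upperToeplitz k f =
      upperToeplitz k fun d => if d = 0 then f 0 else f d + f (d - 1) := by
  ext i j
  simp only [jordanBlock_one_mul_apply, upperToeplitz, Matrix.of_apply]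
  rcases lt_trichotomy (i : ℕ) j with hij | hij | hij
  · have hi : (i : ℕ) + 1 < k := by omega
    simp [hij.le, hi, Nat.succ_le_of_lt hij, show (j : ℕ) - i ≠ 0 by omega,
      show (j : ℕ) - (i + 1) = j - i - 1 by omega]
  · simp [hij]
  · simp [hij.not_ge, show ¬ (i : ℕ) + 1 ≤ j by omega]

lemma jordanBlock_one_mul_upperToeplitz_negBinomCoeff_zero :
    jordanBlock 1 k * upperToeplitz k (negBinomCoeff 0) = 1 := by
  rw [jordanBlock_one_mul_upperToeplitz]
  ext i j
  simp only [upperToeplitz, negBinomCoeff, Matrix.of_apply, Matrix.one_apply, Fin.ext_iff]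
  rcases lt_trichotomy (i : ℕ) j with hij | hij | hij
  · obtain ⟨d, hd⟩ : ∃ d, (j : ℕ) - i = d + 1 := ⟨(j : ℕ) - i - 1, by omega⟩
    simp [hij.le, hij.ne, hd, pow_succ]
  · simp [hij]
  · simp [hij.not_ge, hij.ne']

lemma jordanBlock_one_mul_upperToeplitz_negBinomCoeff_succ (m : ℕ) :
    jordanBlock 1 k * upperToeplitz k (negBinomCoeff (m + 1)) =
      upperToeplitz k (negBinomCoeff m) := by
  rw [jordanBlock_one_mul_upperToeplitz]
  congr 1
  ext (_ | d)
  · simp [negBinomCoeff]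
  · simp only [negBinomCoeff, add_tsub_cancel_right, Nat.succ_ne_zero, if_false]
    rw [show m + 1 + (d + 1) = m + (d + 1) + 1 by ring, show m + 1 + d = m + (d + 1) by ring,
      Nat.choose_succ_succ', pow_succ]
    push_cast
    ring

lemma isUnit_det_jordanBlock_one : IsUnit (jordanBlock 1 k).det :=
  Matrix.isUnit_det_of_right_inverse jordanBlock_one_mul_upperToeplitz_negBinomCoeff_zero

lemma inv_jordanBlock_one_pow_succ (m : ℕ) :
    (jordanBlock 1 k)⁻¹ ^ (m + 1) = upperToeplitz k (negBinomCoeff m) := by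
  induction m with
  | zero =>
    rw [zero_add, pow_one,
      Matrix.inv_eq_right_inv jordanBlock_one_mul_upperToeplitz_negBinomCoeff_zero]
  | succ m ih =>
    rw [pow_succ', ih, ← jordanBlock_one_mul_upperToeplitz_negBinomCoeff_succ, ← Matrix.mul_assoc,
      Matrix.nonsing_inv_mul _ isUnit_det_jordanBlock_one, Matrix.one_mul]

lemma inv_fromBlocks_smul_jordanBlock_one_pow_succ {k₁ k₂ : ℕ} {a b : ℂ} (ha : a ≠ 0)
    (hb : b ≠ 0) (m : ℕ) :
    (Matrix.fromBlocks (a • jordanBlock 1 k₁) 0 0 (b • jordanBlock 1 k₂))⁻¹ ^ (m + 1) =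
      Matrix.fromBlocks (a⁻¹ ^ (m + 1) • upperToeplitz k₁ (negBinomCoeff m)) 0 0
        (b⁻¹ ^ (m + 1) • upperToeplitz k₂ (negBinomCoeff m)) := by
  have inv_smul {k : ℕ} {c : ℂ} (hc : c ≠ 0) :
      (c • jordanBlock 1 k)⁻¹ = c⁻¹ • (jordanBlock 1 k)⁻¹ :=
    Matrix.inv_eq_right_inv <| by
      rw [smul_mul_smul_comm, mul_inv_cancel₀ hc,
        Matrix.mul_nonsing_inv _ isUnit_det_jordanBlock_one, one_smul]
  have isUnit_smul {k : ℕ} {c : ℂ} (hc : c ≠ 0) : IsUnit (c • jordanBlock 1 k) :=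
    (Matrix.isUnit_iff_isUnit_det _).2 <| by
      rw [Matrix.det_smul]; exact (hc.isUnit.pow _).mul isUnit_det_jordanBlock_one
  rw [Matrix.inv_fromBlocks_zero₂₁_of_isUnit_iff _ _ _
      (iff_of_true (isUnit_smul ha) (isUnit_smul hb)), inv_smul ha, inv_smul hb,
    Matrix.mul_zero, Matrix.zero_mul, neg_zero, Matrix.fromBlocks_diagonal_pow, smul_pow, smul_pow,
    inv_jordanBlock_one_pow_succ, inv_jordanBlock_one_pow_succ]

lemma norm_upperToeplitz_negBinomCoeff_le (m : ℕ) (i j : Fin k) :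
    ‖upperToeplitz k (negBinomCoeff m) i j‖ ≤ ((m + 1 : ℕ) : ℝ) ^ k := by
  simp only [upperToeplitz, Matrix.of_apply]
  split_ifs with hij
  · have hchoose := Nat.choose_le_sub_pow (m + (j - i : ℕ)) (j - i)
    rw [Nat.add_right_comm, Nat.add_sub_cancel] at hchoose
    rw [negBinomCoeff, norm_mul, norm_pow, norm_neg, norm_one, one_pow, one_mul,
      Complex.norm_natCast]
    calc (((m + (j - i : ℕ)).choose (j - i) : ℕ) : ℝ) ≤ ((m + 1 : ℕ) : ℝ) ^ (j - i : ℕ) := by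
          exact_mod_cast hchoose
      _ ≤ ((m + 1 : ℕ) : ℝ) ^ k :=
          pow_le_pow_right₀ (by simp) (by omega)
  · simp only [norm_zero]
    positivity

lemma tendsto_upperToeplitz_negBinomCoeff_div_choose (i j : Fin k) :
    Tendsto (fun m : ℕ =>
        upperToeplitz k (negBinomCoeff m) i j / ((m + (k - 1)).choose (k - 1) : ℂ)) atTop
      (𝓝 (if (i : ℕ) = 0 ∧ (j : ℕ) = k - 1 then (-1) ^ (k - 1) else 0)) := by
  by_cases hcorner : (i : ℕ) = 0 ∧ (j : ℕ) = k - 1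
  · rw [if_pos hcorner]
    refine tendsto_const_nhds.congr fun m => ?_
    have hpos : ((m + (k - 1)).choose (k - 1) : ℂ) ≠ 0 := by
      exact_mod_cast (Nat.choose_pos (by omega)).ne'
    rw [upperToeplitz, Matrix.of_apply, if_pos (by omega), negBinomCoeff, hcorner.1, hcorner.2,
      Nat.sub_zero, mul_div_cancel_right₀ _ hpos]
  rw [if_neg hcorner]
  by_cases hij : (i : ℕ) ≤ j
  · have hlt : (j - i : ℕ) < k - 1 := by omega
    simp only [upperToeplitz, Matrix.of_apply, if_pos hij]
    rw [tendsto_zero_iff_norm_tendsto_zero]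
    simpa [negBinomCoeff, norm_mul] using tendsto_add_choose_div_add_choose hlt
  · simp only [upperToeplitz, Matrix.of_apply, if_neg hij, zero_div]
    exact tendsto_const_nhds

lemma tendsto_pow_div_choose_mul_inv_pow_mul_upperToeplitz {a b : ℂ} (hab : ‖a‖ < ‖b‖)
    (e : ℕ) (i j : Fin k) :
    Tendsto (fun m : ℕ => a ^ (m + 1) / ((m + e).choose e : ℂ) *
        (b⁻¹ ^ (m + 1) * upperToeplitz k (negBinomCoeff m) i j)) atTop (𝓝 0) := by
  have hb : 0 < ‖b‖ := (norm_nonneg a).trans_lt hab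
  set r := ‖a‖ / ‖b‖
  have hbound : Tendsto (fun m : ℕ => ((m + 1 : ℕ) : ℝ) ^ k * r ^ (m + 1)) atTop (𝓝 0) :=
    (tendsto_add_atTop_iff_nat 1).2 <|
      tendsto_pow_const_mul_const_pow_of_lt_one k (by positivity) ((div_lt_one hb).2 hab)
  refine squeeze_zero_norm (fun m => ?_) hbound
  have hchoose : (1 : ℝ) ≤ (m + e).choose e := by exact_mod_cast Nat.choose_pos (by omega)
  calc ‖a ^ (m + 1) / ((m + e).choose e : ℂ) *
          (b⁻¹ ^ (m + 1) * upperToeplitz k (negBinomCoeff m) i j)‖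
      = ‖a‖ ^ (m + 1) / (m + e).choose e *
          (‖b‖⁻¹ ^ (m + 1) * ‖upperToeplitz k (negBinomCoeff m) i j‖) := by
        rw [norm_mul, norm_div, norm_mul, norm_pow, norm_pow, norm_inv, Complex.norm_natCast]
    _ ≤ ‖a‖ ^ (m + 1) / 1 * (‖b‖⁻¹ ^ (m + 1) * ((m + 1 : ℕ) : ℝ) ^ k) := by
        gcongr
        exact norm_upperToeplitz_negBinomCoeff_le m i j
    _ = ((m + 1 : ℕ) : ℝ) ^ k * r ^ (m + 1) := by
        rw [div_one, div_pow, div_eq_mul_inv, ← inv_pow]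
        ring

end

/-- for `γ = diag(λ₁ J(1,k₁), λ₂ J(1,k₂))` with `0 < |λ₁| < |λ₂|`,
the normalized inverse powers `(λ₁^m / C(m+k₁-2, k₁-1)) γ^{-m}` converge
entrywise: all entries except the `(1,k₁)`-entry tend to `0`, and the
`(1,k₁)`-entry tends to `(-1)^(k₁-1)`, a value of modulus `1`. -/
theorem loxoparabolic_normalized_inv_pow (lam₁ lam₂ : ℂ)
    (h₁ : 0 < ‖lam₁‖) (h₁₂ : ‖lam₁‖ < ‖lam₂‖)
    (k₁ k₂ : ℕ) (hk₁ : 1 ≤ k₁)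
    (γ : Matrix (Fin k₁ ⊕ Fin k₂) (Fin k₁ ⊕ Fin k₂) ℂ)
    (hγ : γ = Matrix.fromBlocks (lam₁ • jordanBlock 1 k₁) 0 0
      (lam₂ • jordanBlock 1 k₂)) :
    ∀ p q : Fin k₁ ⊕ Fin k₂,
      Tendsto (fun m : ℕ =>
          (lam₁ ^ m / ((m + k₁ - 2).choose (k₁ - 1) : ℂ)) * (((γ⁻¹) ^ m) p q))
        atTop
        (𝓝 (if p = Sum.inl ⟨0, by omega⟩ ∧ q = Sum.inl ⟨k₁ - 1, by omega⟩
          then (-1 : ℂ) ^ (k₁ - 1) else 0)) := by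
  have hlam₁ : lam₁ ≠ 0 := norm_pos_iff.mp h₁
  have hlam₂ : lam₂ ≠ 0 := norm_pos_iff.mp (h₁.trans h₁₂)
  have hden (m : ℕ) : m + 1 + k₁ - 2 = m + (k₁ - 1) := by omega
  intro p q
  -- after `m ↦ m + 1` the truncated `m + k₁ - 2` becomes `m + (k₁ - 1)`
  rw [← tendsto_add_atTop_iff_nat 1]
  simp only [hγ, hden, inv_fromBlocks_smul_jordanBlock_one_pow_succ hlam₁ hlam₂]
  rcases p with i | i <;> rcases q with j | j
  · have hcancel (m : ℕ) (c x : ℂ) : lam₁ ^ (m + 1) / c * (lam₁⁻¹ ^ (m + 1) * x) = x / c := by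
      rw [inv_pow, div_mul_eq_mul_div, mul_inv_cancel_left₀ (pow_ne_zero _ hlam₁)]
    simp only [Matrix.fromBlocks_apply₁₁, Matrix.smul_apply, smul_eq_mul, hcancel, Sum.inl.injEq,
      Fin.ext_iff]
    exact tendsto_upperToeplitz_negBinomCoeff_div_choose i j
  · simp
  · simp
  · simpa using tendsto_pow_div_choose_mul_inv_pow_mul_upperToeplitz h₁₂ (k₁ - 1) i j
end
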